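/- Lemma 3.2(1): Let u : Ω → ℝ be Lipschitz and let φ be a test function. For ε ∈ ℝ set D(ε) = ∫_{Ω ∖ S(u_ε)} N(u_ε)(x)·∇φ(x) dx + ∫_Ω H(x)φ(x) dx. Then for any two regular values ε₁ ≤ ε₂ one has D(ε₁) ≤ D(ε₂); that is, the derivative d𝔉(u_ε)/dε is a nondecreasing function of ε on the set of regular values. -/

import Mathlib

/-!
Where `∇φ x ≠ 0`, the vector `∇u_ε + F⃗` moves along the line `w + ε ∇φ x`, and
`t ↦ ⟪(w + t b) / ‖w + t b‖, b⟫` is nondecreasing: it is the derivative of the convex function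
`t ↦ ‖w + t b‖`. For regular `ε₁ ≤ ε₂` this pointwise inequality holds at almost every point
of `Ω`, and it integrates because the integrands are bounded by `Lip φ` on a set of finite
measure. The integrand vanishes on `S(u_ε)`, so integrating over `Ω ∖ S(u_ε)` or over `Ω`
is the same, which avoids any question about the measurability of `S(u_ε)`.
-/

open MeasureTheory
open scoped RealInnerProductSpace ENNReal

/-- The vector field `∇u + ε ∇φ + F⃗` (the a.e. gradient of `u_ε = u + ε φ`
shifted by `F⃗`). -/
noncomputable def gradShift {m : ℕ} (u φ : EuclideanSpace ℝ (Fin m) → ℝ)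
    (F : EuclideanSpace ℝ (Fin m) → EuclideanSpace ℝ (Fin m)) (ε : ℝ)
    (x : EuclideanSpace ℝ (Fin m)) : EuclideanSpace ℝ (Fin m) :=
  gradient u x + ε • gradient φ x + F x

/-- The generalized p-area functional `𝔉(u_ε)` of `u_ε = u + ε φ`. -/
noncomputable def pArea {m : ℕ} (Ω : Set (EuclideanSpace ℝ (Fin m)))
    (u φ : EuclideanSpace ℝ (Fin m) → ℝ)
    (F : EuclideanSpace ℝ (Fin m) → EuclideanSpace ℝ (Fin m))
    (H : EuclideanSpace ℝ (Fin m) → ℝ) (ε : ℝ) : ℝ :=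
  ∫ x in Ω, (‖gradShift u φ F ε x‖ + H x * (u x + ε * φ x))

/-- The singular set `S(u_ε) = {x ∈ Ω : ∇u_ε + F⃗ = 0}` of `u_ε = u + ε φ`. -/
def singSet {m : ℕ} (Ω : Set (EuclideanSpace ℝ (Fin m)))
    (u φ : EuclideanSpace ℝ (Fin m) → ℝ)
    (F : EuclideanSpace ℝ (Fin m) → EuclideanSpace ℝ (Fin m)) (ε : ℝ) :
    Set (EuclideanSpace ℝ (Fin m)) :=
  {x ∈ Ω | gradShift u φ F ε x = 0}

section InvNormSmul

variable {E : Type*} [NormedAddCommGroup E] [InnerProductSpace ℝ E]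

theorem norm_inner_inv_norm_smul_le (v b : E) : ‖⟪‖v‖⁻¹ • v, b⟫‖ ≤ ‖b‖ := by
  rcases eq_or_ne v 0 with rfl | hv
  · simp
  · calc ‖⟪‖v‖⁻¹ • v, b⟫‖ ≤ ‖‖v‖⁻¹ • v‖ * ‖b‖ := norm_inner_le_norm _ _
      _ = ‖b‖ := by
        rw [norm_smul, norm_inv, norm_norm, inv_mul_cancel₀ (norm_ne_zero_iff.mpr hv), one_mul]

/- Multiplying through by `t ‖w‖ ‖v‖` turns the claim into
`⟪w, v⟫ (‖w‖ + ‖v‖) ≤ ‖w‖ ‖v‖ (‖w‖ + ‖v‖)`, which is Cauchy–Schwarz. -/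
theorem inner_inv_norm_smul_le_of_sub_eq_smul {v w b : E} {t : ℝ} (ht : 0 ≤ t) (hw : w ≠ 0)
    (hv : v ≠ 0) (hvw : v - w = t • b) : ⟪‖w‖⁻¹ • w, b⟫ ≤ ⟪‖v‖⁻¹ • v, b⟫ := by
  rcases ht.eq_or_lt with rfl | ht
  · rw [zero_smul, sub_eq_zero] at hvw
    rw [hvw]
  have hw' : 0 < ‖w‖ := norm_pos_iff.mpr hw
  have hv' : 0 < ‖v‖ := norm_pos_iff.mpr hv
  have hwb : t * ⟪w, b⟫ = ⟪w, v⟫ - ‖w‖ ^ 2 := by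
    rw [← real_inner_smul_right, ← hvw, inner_sub_right, real_inner_self_eq_norm_sq]
  have hvb : t * ⟪v, b⟫ = ‖v‖ ^ 2 - ⟪w, v⟫ := by
    rw [← real_inner_smul_right, ← hvw, inner_sub_right, real_inner_self_eq_norm_sq,
      real_inner_comm w v]
  rw [real_inner_smul_left, real_inner_smul_left, inv_mul_eq_div, inv_mul_eq_div,
    div_le_div_iff₀ hw' hv']
  nlinarith [mul_nonneg (add_pos hw' hv').le (sub_nonneg.mpr (real_inner_le_norm w v))]

variable [MeasurableSpace E] [BorelSpace E] [SecondCountableTopology E]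

theorem integrableOn_inner_inv_norm_smul {X : Type*} [MeasurableSpace X] {μ : Measure X}
    {s : Set X} (hs : μ s ≠ ∞) {v b : X → E} (hv : AEMeasurable v (μ.restrict s))
    (hb : AEMeasurable b (μ.restrict s)) {K : ℝ} (hbK : ∀ x, ‖b x‖ ≤ K) :
    IntegrableOn (fun x => ⟪‖v x‖⁻¹ • v x, b x⟫) s μ :=
  Integrable.mono' (integrableOn_const hs) ((hv.norm.inv.smul hv).inner hb).aestronglyMeasurable
    (Filter.Eventually.of_forall fun x => (norm_inner_inv_norm_smul_le _ _).trans (hbK x))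

end InvNormSmul

section Gradient

variable {E : Type*} [NormedAddCommGroup E] [InnerProductSpace ℝ E] [CompleteSpace E]

theorem norm_gradient_le_of_lipschitz {f : E → ℝ} {K : NNReal} (hf : LipschitzWith K f)
    (x : E) : ‖gradient f x‖ ≤ K := by
  rw [← (InnerProductSpace.toDual ℝ E).norm_map, toDual_gradient]
  exact norm_fderiv_le_of_lipschitz ℝ hf

theorem measurable_gradient [MeasurableSpace E] [BorelSpace E] (f : E → ℝ) :
    Measurable (gradient f) := by
  have : gradient f = (InnerProductSpace.toDual ℝ E).symm ∘ fderiv ℝ f := by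
    rw [← toDual_comp_gradient, ← Function.comp_assoc, LinearIsometryEquiv.symm_comp_self,
      Function.id_comp]
  rw [this]
  exact (InnerProductSpace.toDual ℝ E).symm.continuous.measurable.comp (measurable_fderiv ℝ f)

end Gradient

section GradShift

variable {m : ℕ}

theorem aemeasurable_gradShift {μ : Measure (EuclideanSpace ℝ (Fin m))}
    {F : EuclideanSpace ℝ (Fin m) → EuclideanSpace ℝ (Fin m)} (hF : AEMeasurable F μ)
    (u φ : EuclideanSpace ℝ (Fin m) → ℝ) (ε : ℝ) : AEMeasurable (gradShift u φ F ε) μ :=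
  ((measurable_gradient u).aemeasurable.add
    ((measurable_gradient φ).aemeasurable.const_smul ε)).add hF

theorem setIntegral_diff_singSet {Ω : Set (EuclideanSpace ℝ (Fin m))} (hΩ : MeasurableSet Ω)
    (u φ : EuclideanSpace ℝ (Fin m) → ℝ)
    (F : EuclideanSpace ℝ (Fin m) → EuclideanSpace ℝ (Fin m)) (ε : ℝ) :
    ∫ x in Ω \ singSet Ω u φ F ε,
        ⟪‖gradShift u φ F ε x‖⁻¹ • gradShift u φ F ε x, gradient φ x⟫ =
      ∫ x in Ω, ⟪‖gradShift u φ F ε x‖⁻¹ • gradShift u φ F ε x, gradient φ x⟫ := by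
  refine (setIntegral_eq_of_subset_of_forall_sdiff_eq_zero hΩ Set.sdiff_subset ?_).symm
  rintro x ⟨hxΩ, hx⟩
  have hx0 : gradShift u φ F ε x = 0 := by
    by_contra h
    exact hx ⟨hxΩ, fun hxS => h hxS.2⟩
  simp [hx0]

theorem inner_inv_norm_smul_gradShift_le {Ω : Set (EuclideanSpace ℝ (Fin m))}
    {u φ : EuclideanSpace ℝ (Fin m) → ℝ}
    {F : EuclideanSpace ℝ (Fin m) → EuclideanSpace ℝ (Fin m)} {ε₁ ε₂ : ℝ}
    {x : EuclideanSpace ℝ (Fin m)} (hle : ε₁ ≤ ε₂) (hxΩ : x ∈ Ω)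
    (hx₁ : x ∉ singSet Ω u φ F ε₁ ∩ {x | gradient φ x ≠ 0})
    (hx₂ : x ∉ singSet Ω u φ F ε₂ ∩ {x | gradient φ x ≠ 0}) :
    ⟪‖gradShift u φ F ε₁ x‖⁻¹ • gradShift u φ F ε₁ x, gradient φ x⟫ ≤
      ⟪‖gradShift u φ F ε₂ x‖⁻¹ • gradShift u φ F ε₂ x, gradient φ x⟫ := by
  by_cases hφx : gradient φ x = 0
  · simp [hφx]
  refine inner_inv_norm_smul_le_of_sub_eq_smul (sub_nonneg.mpr hle)
    (fun h => hx₁ ⟨⟨hxΩ, h⟩, hφx⟩) (fun h => hx₂ ⟨⟨hxΩ, h⟩, hφx⟩) ?_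
  simp only [gradShift, sub_smul]
  abel

end GradShift

theorem deriv_pArea_monotone_general {m : ℕ}
    (Ω : Set (EuclideanSpace ℝ (Fin m)))
    (hΩopen : IsOpen Ω) (hΩbdd : Bornology.IsBounded Ω)
    (F : EuclideanSpace ℝ (Fin m) → EuclideanSpace ℝ (Fin m))
    (hF : IntegrableOn F Ω volume)
    (H : EuclideanSpace ℝ (Fin m) → ℝ)
    (u : EuclideanSpace ℝ (Fin m) → ℝ)
    (φ : EuclideanSpace ℝ (Fin m) → ℝ) (hφ : ∃ K, LipschitzWith K φ)
    (ε₁ ε₂ : ℝ) (hle : ε₁ ≤ ε₂)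
    (hreg₁ : volume (singSet Ω u φ F ε₁ ∩ {x | gradient φ x ≠ 0}) = 0)
    (hreg₂ : volume (singSet Ω u φ F ε₂ ∩ {x | gradient φ x ≠ 0}) = 0) :
    (∫ x in Ω \ singSet Ω u φ F ε₁,
        ⟪‖gradShift u φ F ε₁ x‖⁻¹ • gradShift u φ F ε₁ x, gradient φ x⟫) +
      (∫ x in Ω, H x * φ x) ≤
    (∫ x in Ω \ singSet Ω u φ F ε₂,
        ⟪‖gradShift u φ F ε₂ x‖⁻¹ • gradShift u φ F ε₂ x, gradient φ x⟫) +
      (∫ x in Ω, H x * φ x) := by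
  obtain ⟨K, hK⟩ := hφ
  have hΩ : MeasurableSet Ω := hΩopen.measurableSet
  have hint (ε : ℝ) : IntegrableOn
      (fun x => ⟪‖gradShift u φ F ε x‖⁻¹ • gradShift u φ F ε x, gradient φ x⟫) Ω :=
    integrableOn_inner_inv_norm_smul hΩbdd.measure_lt_top.ne
      (aemeasurable_gradShift hF.aemeasurable u φ ε) (measurable_gradient φ).aemeasurable
      (norm_gradient_le_of_lipschitz hK)
  rw [setIntegral_diff_singSet hΩ, setIntegral_diff_singSet hΩ]
  gcongr ?_ + _
  refine integral_mono_ae (hint ε₁) (hint ε₂) ?_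
  filter_upwards [ae_restrict_mem hΩ, ae_restrict_of_ae (measure_eq_zero_iff_ae_notMem.mp hreg₁),
    ae_restrict_of_ae (measure_eq_zero_iff_ae_notMem.mp hreg₂)] with x hxΩ hx₁ hx₂
  exact inner_inv_norm_smul_gradShift_le hle hxΩ hx₁ hx₂

/-- **Lemma 3.2(1)**: the derivative
`D(ε) = ∫_{Ω ∖ S(u_ε)} N(u_ε)·∇φ + ∫_Ω H φ` of `ε ↦ 𝔉(u_ε)` is nondecreasing
on the set of regular values. -/
theorem deriv_pArea_monotone {m : ℕ} (hm : 1 ≤ m)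
    (Ω : Set (EuclideanSpace ℝ (Fin m)))
    (hΩopen : IsOpen Ω) (hΩbdd : Bornology.IsBounded Ω)
    (hΩne : Ω.Nonempty) (hΩconn : IsConnected Ω)
    (F : EuclideanSpace ℝ (Fin m) → EuclideanSpace ℝ (Fin m))
    (hF : IntegrableOn F Ω volume)
    (H : EuclideanSpace ℝ (Fin m) → ℝ)
    (hH : MemLp H ⊤ (volume.restrict Ω))
    (u : EuclideanSpace ℝ (Fin m) → ℝ) (hu : ∃ K, LipschitzOnWith K u Ω)
    (φ : EuclideanSpace ℝ (Fin m) → ℝ) (hφ : ∃ K, LipschitzWith K φ)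
    (hφsupp : HasCompactSupport φ) (hφΩ : tsupport φ ⊆ Ω)
    (ε₁ ε₂ : ℝ) (hle : ε₁ ≤ ε₂)
    (hreg₁ : volume (singSet Ω u φ F ε₁ ∩ {x | gradient φ x ≠ 0}) = 0)
    (hreg₂ : volume (singSet Ω u φ F ε₂ ∩ {x | gradient φ x ≠ 0}) = 0) :
    (∫ x in Ω \ singSet Ω u φ F ε₁,
        ⟪‖gradShift u φ F ε₁ x‖⁻¹ • gradShift u φ F ε₁ x, gradient φ x⟫) +
      (∫ x in Ω, H x * φ x) ≤
    (∫ x in Ω \ singSet Ω u φ F ε₂,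
        ⟪‖gradShift u φ F ε₂ x‖⁻¹ • gradShift u φ F ε₂ x, gradient φ x⟫) +
      (∫ x in Ω, H x * φ x) :=
  deriv_pArea_monotone_general Ω hΩopen hΩbdd F hF H u φ hφ ε₁ ε₂ hle hreg₁ hreg₂
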